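/- arXiv:2211.05291 — 4 statements merged into one kernel-verified Lean document; each statement's English description precedes it below -/
import Mathlib

section
/- Let ℓ ≥ 1, let Q = (q^{ij}) ∈ ℝ^{ℓ×ℓ} satisfy Σ_{j=1}^ℓ q^{ij} = 0 for every i, let T > 0, a' > 0 and γ < 0. Define P̲^i(t) = (e^{−a'(T−t)} + (1/a')(1 − e^{−a'(T−t)}))^{1−γ} for every i ∈ {1,…,ℓ} and t ∈ [0,T]. Then for each i: P̲^i(T) = 1, P̲^i(t) ≥ e^{−a'(1−γ)T} for all t ∈ [0,T], and P̲^i is differentiable with (d/dt)P̲^i(t) = −[−a'(1−γ)·P̲^i(t) + (1−γ)·P̲^i(t)^{−γ/(1−γ)} + Σ_{j=1}^ℓ q^{ij}·P̲^j(t)] for all t ∈ [0,T]. -/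
/-!
With `g(t) = e^{-a'(T-t)} + (1 - e^{-a'(T-t)}) / a'` one has `g(T) = 1` and `g' = a' g - 1`,
and for `t ≤ T` the function `g` is at least `e^{-a'(T-t)} ≥ e^{-a'T}`. Hence `P = g^{1-γ}`
satisfies `P' = a'(1-γ) P - (1-γ) g^{-γ}` with `g^{-γ} = P^{-γ/(1-γ)}`. All components of `P`
coincide, so the coupling term `∑ⱼ qⁱʲ Pʲ` vanishes because the rows of `Q` sum to zero.
-/

open Real

noncomputable section

def barrierBase (a T t : ℝ) : ℝ :=
  exp (-a * (T - t)) + (1 / a) * (1 - exp (-a * (T - t)))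

variable {a T t : ℝ}

@[simp]
lemma barrierBase_self : barrierBase a T T = 1 := by
  simp [barrierBase]

lemma exp_le_barrierBase (ha : 0 < a) (htT : t ≤ T) :
    exp (-a * (T - t)) ≤ barrierBase a T t := by
  have hu : exp (-a * (T - t)) ≤ 1 := exp_le_one_iff.mpr (by nlinarith)
  have : 0 ≤ (1 / a) * (1 - exp (-a * (T - t))) := mul_nonneg (by positivity) (by linarith)
  unfold barrierBase
  linarith

lemma barrierBase_pos (ha : 0 < a) (htT : t ≤ T) : 0 < barrierBase a T t :=
  (exp_pos _).trans_le (exp_le_barrierBase ha htT)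

lemma exp_mul_le_barrierBase_rpow {p : ℝ} (ha : 0 < a) (hp : 0 ≤ p) (ht : t ∈ Set.Icc 0 T) :
    exp (-a * p * T) ≤ barrierBase a T t ^ p := by
  have hT : exp (-a * T) ≤ barrierBase a T t :=
    (exp_le_exp.mpr (by nlinarith [ht.1])).trans (exp_le_barrierBase ha ht.2)
  calc exp (-a * p * T) = exp (-a * T) ^ p := by rw [← exp_mul]; ring_nf
    _ ≤ barrierBase a T t ^ p := rpow_le_rpow (exp_pos _).le hT hp

lemma hasDerivAt_barrierBase (ha : a ≠ 0) :
    HasDerivAt (barrierBase a T) (a * barrierBase a T t - 1) t := by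
  have hlin : HasDerivAt (fun s => -a * (T - s)) a t := by
    simpa using ((hasDerivAt_const t T).sub (hasDerivAt_id t)).const_mul (-a)
  have hexp := hlin.exp
  refine (hexp.add (((hasDerivAt_const t (1 : ℝ)).sub hexp).const_mul (1 / a))).congr_deriv ?_
  unfold barrierBase
  field_simp
  ring

lemma hasDerivAt_barrierBase_rpow {γ : ℝ} (ha : 0 < a) (hγ : γ < 1) (htT : t ≤ T) :
    HasDerivAt (fun s => barrierBase a T s ^ (1 - γ))
      (a * (1 - γ) * barrierBase a T t ^ (1 - γ)
        - (1 - γ) * (barrierBase a T t ^ (1 - γ)) ^ (-γ / (1 - γ))) t := by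
  set g := barrierBase a T t
  have hg : 0 < g := barrierBase_pos ha htT
  have hpow : (g ^ (1 - γ)) ^ (-γ / (1 - γ)) = g ^ (1 - γ - 1) := by
    rw [← rpow_mul hg.le]
    congr 1
    field_simp [(sub_pos.mpr hγ).ne']
    ring
  have hsplit : g ^ (1 - γ) = g * g ^ (1 - γ - 1) := by
    conv_lhs => rw [show 1 - γ = 1 + (1 - γ - 1) by ring]
    rw [rpow_add hg, rpow_one]
  refine ((hasDerivAt_barrierBase ha.ne').rpow_const (p := 1 - γ) (Or.inl hg.ne')).congr_deriv ?_
  rw [hpow, hsplit]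
  ring

end

theorem stmt_1_general (ℓ : ℕ) (Q : Fin ℓ → Fin ℓ → ℝ)
    (hQ : ∀ i, ∑ j, Q i j = 0) (T a' γ : ℝ) (ha' : 0 < a')
    (hγ : γ < 0)
    (P : Fin ℓ → ℝ → ℝ)
    (hP : ∀ i t, P i t
      = (Real.exp (-a' * (T - t)) + (1 / a') * (1 - Real.exp (-a' * (T - t)))) ^ (1 - γ)) :
    ∀ i, P i T = 1
      ∧ (∀ t ∈ Set.Icc 0 T, Real.exp (-a' * (1 - γ) * T) ≤ P i t)
      ∧ (∀ t ∈ Set.Icc 0 T, HasDerivAt (P i)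
          (-(-a' * (1 - γ) * P i t + (1 - γ) * (P i t) ^ (-γ / (1 - γ))
            + ∑ j, Q i j * P j t)) t) := by
  intro i
  have hPi : P i = fun s => barrierBase a' T s ^ (1 - γ) := funext (hP i)
  have hcoupling (t : ℝ) : ∑ j, Q i j * P j t = 0 := by
    simp only [hP, ← Finset.sum_mul, hQ i, zero_mul]
  refine ⟨by simp [hPi], fun t ht => ?_, fun t ht => ?_⟩
  · rw [hPi]
    exact exp_mul_le_barrierBase_rpow ha' (by linarith) ht
  · rw [hcoupling, hPi]
    convert hasDerivAt_barrierBase_rpow ha' (by linarith) ht.2 using 1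
    ring

theorem stmt_1 (ℓ : ℕ) (hℓ : 1 ≤ ℓ) (Q : Fin ℓ → Fin ℓ → ℝ)
    (hQ : ∀ i, ∑ j, Q i j = 0) (T a' γ : ℝ) (hT : 0 < T) (ha' : 0 < a')
    (hγ : γ < 0)
    (P : Fin ℓ → ℝ → ℝ)
    (hP : ∀ i t, P i t
      = (Real.exp (-a' * (T - t)) + (1 / a') * (1 - Real.exp (-a' * (T - t)))) ^ (1 - γ)) :
    ∀ i, P i T = 1
      ∧ (∀ t ∈ Set.Icc 0 T, Real.exp (-a' * (1 - γ) * T) ≤ P i t)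
      ∧ (∀ t ∈ Set.Icc 0 T, HasDerivAt (P i)
          (-(-a' * (1 - γ) * P i t + (1 - γ) * (P i t) ^ (-γ / (1 - γ))
            + ∑ j, Q i j * P j t)) t) :=
  stmt_1_general ℓ Q hQ T a' γ ha' hγ P hP
end

section
/- Let γ < 0, ε > 0 and let k ∈ ℝ satisfy k ≥ −γε. Let g : ℝ → ℝ be any function with 0 ≤ g(x) ≤ 1 for all x. Then for every P ∈ ℝ: sup_{P̃ ∈ ℝ} [ (ε^γ − γε·P̃)·g(P̃) − k·|P − P̃| ] ≤ ε^γ − γε·|P|. -/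
/-! The regularized generator at `P` is a supremum over `P̃` of `(c + a P̃) g(P̃) - k |P - P̃|`
with `c = ε ^ γ ≥ 0` and `a = -γ ε ∈ [0, k]`. Since `0 ≤ g ≤ 1`, the first term is at most
`c + a |P̃| ≤ c + a |P| + a |P - P̃|`, and the last summand is absorbed by the penalty because
`a ≤ k`. -/

lemma mul_sub_mul_abs_sub_le {c a k t x P : ℝ} (hc : 0 ≤ c) (ha : 0 ≤ a) (hak : a ≤ k)
    (ht : t ∈ Set.Icc (0 : ℝ) 1) :
    (c + a * x) * t - k * |P - x| ≤ c + a * |P| := by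
  obtain ⟨ht0, ht1⟩ := ht
  have hprod : (c + a * x) * t ≤ c + a * |x| := by
    rcases le_total 0 (c + a * x) with hpos | hneg
    · calc (c + a * x) * t ≤ c + a * x := mul_le_of_le_one_right hpos ht1
        _ ≤ c + a * |x| := by gcongr; exact le_abs_self x
    · calc (c + a * x) * t ≤ 0 := mul_nonpos_of_nonpos_of_nonneg hneg ht0
        _ ≤ c + a * |x| := by positivity
  have htri : |x| - |P| ≤ |P - x| := abs_sub_comm x P ▸ abs_sub_abs_le_abs_sub x P
  have hshift : a * |x| ≤ a * |P| + k * |P - x| :=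
    calc a * |x| = a * |P| + a * (|x| - |P|) := by ring
      _ ≤ a * |P| + a * |P - x| := by gcongr
      _ ≤ a * |P| + k * |P - x| := by gcongr
  linarith

theorem stmt_14 (γ ε k : ℝ) (hγ : γ < 0) (hε : 0 < ε) (hk : -γ * ε ≤ k)
    (g : ℝ → ℝ) (hg : ∀ x, g x ∈ Set.Icc (0 : ℝ) 1) :
    ∀ P : ℝ,
      sSup {y : ℝ | ∃ Pt : ℝ, y = (ε ^ γ - γ * ε * Pt) * g Pt - k * |P - Pt|}
        ≤ ε ^ γ - γ * ε * |P| := by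
  intro P
  have hc : 0 ≤ ε ^ γ := Real.rpow_nonneg hε.le γ
  have ha : 0 ≤ -γ * ε := mul_nonneg (neg_nonneg.mpr hγ.le) hε.le
  refine csSup_le ⟨_, 0, rfl⟩ ?_
  rintro y ⟨Pt, rfl⟩
  calc (ε ^ γ - γ * ε * Pt) * g Pt - k * |P - Pt|
      = (ε ^ γ + -γ * ε * Pt) * g Pt - k * |P - Pt| := by ring
    _ ≤ ε ^ γ + -γ * ε * |P| := mul_sub_mul_abs_sub_le hc ha hk (hg Pt)
    _ = ε ^ γ - γ * ε * |P| := by ring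
end

section
/- Let m, n ≥ 1 and let constants 0 < δ₁ ≤ δ₂, δ > 0, C > 0, ε > 0 be given. Let h ∈ [δ₁, δ₂], let b ∈ ℝ^m with |b| ≤ C, let σ ∈ ℝ^{m×n} with σσ' ≥ δ·I_m and |σ| ≤ C, let η ∈ ℝⁿ, and let Θ ⊆ ℝ^m × [0,∞) be a set containing (0, ε). Then there exists a constant K > 0, depending only on (δ₁, δ₂, δ, C, ε, m, n) and not on η, such that every pair (π̂, ĉ) ∈ Θ with ĉ > 0 that attains sup_{(π,c) ∈ Θ, c > 0} [ −(h/2)·π'σσ'π + π'(hb + ση) + ln c − h·c ] satisfies |π̂| ≤ K·(1 + |η|), e^{−K(1+|η|²)} ≤ ĉ, and ĉ ≤ K·(1 + |η|²). -/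
/-!
Comparing the optimum with the admissible point `(0, ε)`, and using `σσ' ≥ δ`, Cauchy–Schwarz
and `ln c - h c ≤ -1 - ln h`, gives
`δ₁δ/2 |π̂|² + (h ĉ - ln ĉ) ≤ C (δ₂ + |η|) |π̂| + const`.
The left side is quadratic and the right side linear in `|π̂|`, so `|π̂| = O(1 + |η|)`, and then
`h ĉ - ln ĉ = O(1 + |η|²)`. This bounds `-ln ĉ` from above, and also `ĉ`, because
`ln c ≤ δ₁ c / 2 + const`.
-/

open Matrix Real

lemma sqrt_sum_mulVec_sq_le {ι κ : Type*} [Fintype ι] [Fintype κ] (A : Matrix ι κ ℝ)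
    (x : κ → ℝ) :
    √(∑ i, (A *ᵥ x) i ^ 2) ≤ √(∑ i, ∑ j, A i j ^ 2) * √(∑ j, x j ^ 2) := by
  calc √(∑ i, (A *ᵥ x) i ^ 2) ≤ √((∑ i, ∑ j, A i j ^ 2) * ∑ j, x j ^ 2) := by
        rw [Finset.sum_mul]
        exact sqrt_le_sqrt (Finset.sum_le_sum fun i _ => Finset.sum_mul_sq_le_sq_mul_sq _ _ _)
    _ = _ := sqrt_mul (Finset.sum_nonneg fun i _ => Finset.sum_nonneg fun j _ => sq_nonneg _) _

lemma dotProduct_smul_add_mulVec_le {ι κ : Type*} [Fintype ι] [Fintype κ] {h δ₂ C : ℝ}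
    (hh : h ∈ Set.Icc 0 δ₂) (x b : ι → ℝ) (hb : √(∑ i, b i ^ 2) ≤ C)
    (A : Matrix ι κ ℝ) (hA : √(∑ i, ∑ j, A i j ^ 2) ≤ C) (y : κ → ℝ) :
    x ⬝ᵥ (h • b + A *ᵥ y) ≤ C * (δ₂ + √(∑ j, y j ^ 2)) * √(∑ i, x i ^ 2) := by
  have hxb : x ⬝ᵥ b ≤ √(∑ i, x i ^ 2) * C :=
    (sum_mul_le_sqrt_mul_sqrt _ _ _).trans (by gcongr)
  have hxAy : x ⬝ᵥ (A *ᵥ y) ≤ √(∑ i, x i ^ 2) * (C * √(∑ j, y j ^ 2)) :=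
    (sum_mul_le_sqrt_mul_sqrt _ _ _).trans
      (by gcongr; exact (sqrt_sum_mulVec_sq_le A y).trans (by gcongr))
  have hhxb : h * (x ⬝ᵥ b) ≤ δ₂ * (√(∑ i, x i ^ 2) * C) :=
    (mul_le_mul_of_nonneg_left hxb hh.1).trans
      (mul_le_mul_of_nonneg_right hh.2 (mul_nonneg (sqrt_nonneg _) ((sqrt_nonneg _).trans hb)))
  rw [dotProduct_add, dotProduct_smul, smul_eq_mul]
  linarith

lemma mul_sum_sq_le_of_posSemidef_sub_smul_one {ι : Type*} [Fintype ι] [DecidableEq ι]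
    {A : Matrix ι ι ℝ} {δ : ℝ} (hA : (A - δ • 1).PosSemidef) (x : ι → ℝ) :
    δ * √(∑ i, x i ^ 2) ^ 2 ≤ x ⬝ᵥ (A *ᵥ x) := by
  have hx := hA.dotProduct_mulVec_nonneg x
  rw [sq_sqrt (Finset.sum_nonneg fun i _ => sq_nonneg _)]
  simp only [star_trivial, sub_mulVec, smul_mulVec, one_mulVec, dotProduct_sub,
    dotProduct_smul, smul_eq_mul, sub_nonneg] at hx
  simpa only [dotProduct, sq] using hx

lemma log_sub_mul_le {h c : ℝ} (hh : 0 < h) (hc : 0 < c) : log c - h * c ≤ -1 - log h := by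
  have := log_le_sub_one_of_pos (mul_pos hh hc)
  rw [log_mul hh.ne' hc.ne'] at this
  linarith

lemma exp_neg_le_of_mul_sub_log_le {h c R : ℝ} (hh : 0 ≤ h) (hc : 0 < c)
    (hR : h * c - log c ≤ R) : exp (-R) ≤ c :=
  calc exp (-R) ≤ exp (log c) := exp_le_exp.2 (by linarith [mul_nonneg hh hc.le])
    _ = c := exp_log hc

lemma le_of_mul_sub_log_le {δ₁ h c R : ℝ} (hδ₁ : 0 < δ₁) (hh : δ₁ ≤ h) (hc : 0 < c)
    (hR : h * c - log c ≤ R) : c ≤ 2 / δ₁ * (R - 1 - log (δ₁ / 2)) := by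
  have hlog := log_sub_mul_le (half_pos hδ₁) hc
  have hhc : δ₁ * c ≤ h * c := mul_le_mul_of_nonneg_right hh hc.le
  rw [div_mul_eq_mul_div, le_div_iff₀ hδ₁]
  linarith

lemma le_max_one_of_mul_sq_le {a B D x : ℝ} (ha : 0 < a)
    (h : a * x ^ 2 ≤ B * x + D) : x ≤ max 1 ((B + |D|) / a) := by
  rcases le_or_gt x 1 with hx1 | hx1
  · exact le_max_of_le_left hx1
  · refine le_max_of_le_right ((le_div_iff₀ ha).2 ?_)
    nlinarith [le_abs_self D, abs_nonneg D]

lemma exists_bounds_of_mul_sq_add_le {a B₀ B₁ M r₀ : ℝ} (ha : 0 < a) (hB₀ : 0 ≤ B₀)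
    (hB₁ : 0 ≤ B₁) :
    ∃ K₁ K₂ : ℝ, 0 < K₁ ∧ 0 ≤ K₂ ∧ ∀ x E r : ℝ, 0 ≤ x → 0 ≤ E → r₀ ≤ r →
      a * x ^ 2 + r ≤ (B₀ + B₁ * E) * x + M → x ≤ K₁ * (1 + E) ∧ r ≤ K₂ * (1 + E ^ 2) := by
  set K₁ := (a + B₀ + B₁ + |M - r₀|) / a
  have hK₁ : a * K₁ = a + B₀ + B₁ + |M - r₀| := mul_div_cancel₀ _ ha.ne'
  have hK₁1 : 1 ≤ K₁ := by rw [le_div_iff₀ ha]; linarith [abs_nonneg (M - r₀)]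
  refine ⟨K₁, 2 * (B₀ + B₁) * K₁ + |M|, by linarith, by positivity,
    fun x E r hx hE hr h => ?_⟩
  have hB : B₀ + B₁ * E ≤ (B₀ + B₁) * (1 + E) := by nlinarith
  have hxK : x ≤ K₁ * (1 + E) := by
    refine (le_max_one_of_mul_sq_le ha (B := B₀ + B₁ * E) (D := M - r₀) (by linarith)).trans
      (max_le ?_ ?_)
    · nlinarith
    · rw [div_le_iff₀ ha]
      nlinarith [abs_nonneg (M - r₀)]
  refine ⟨hxK, ?_⟩
  have hsq : (1 + E) ^ 2 ≤ 2 * (1 + E ^ 2) := by nlinarith [sq_nonneg (1 - E)]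
  calc r ≤ (B₀ + B₁ * E) * x + M := by nlinarith
    _ ≤ (B₀ + B₁) * K₁ * (1 + E) ^ 2 + |M| * (1 + E ^ 2) := by
        have := mul_le_mul hB hxK hx (by positivity)
        nlinarith [le_abs_self M, abs_nonneg M]
    _ ≤ (2 * (B₀ + B₁) * K₁ + |M|) * (1 + E ^ 2) := by
        have := mul_le_mul_of_nonneg_left hsq (by positivity : 0 ≤ (B₀ + B₁) * K₁)
        nlinarith

theorem exists_bounds_of_value_at_zero_le {δ₁ δ₂ δ C ε : ℝ} (hδ₁ : 0 < δ₁) (hδ₁₂ : δ₁ ≤ δ₂)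
    (hδ : 0 < δ) (hC : 0 ≤ C) (hε : 0 ≤ ε) :
    ∃ K : ℝ, 0 < K ∧ ∀ h ∈ Set.Icc δ₁ δ₂, ∀ P E Q S c : ℝ, 0 ≤ P → 0 ≤ E → 0 < c →
      δ * P ^ 2 ≤ Q → S ≤ C * (δ₂ + E) * P →
      log ε - h * ε ≤ -(h / 2) * Q + S + log c - h * c →
      P ≤ K * (1 + E) ∧ exp (-K * (1 + E ^ 2)) ≤ c ∧ c ≤ K * (1 + E ^ 2) := by
  obtain ⟨K₁, K₂, hK₁, hK₂, hbound⟩ := exists_bounds_of_mul_sq_add_le (a := δ₁ * δ / 2)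
    (B₀ := C * δ₂) (B₁ := C) (M := δ₂ * ε - log ε) (r₀ := 1 + log δ₁) (by positivity)
    (mul_nonneg hC (hδ₁.le.trans hδ₁₂)) hC
  set K₃ := 2 / δ₁ * (K₂ + |1 + log (δ₁ / 2)|)
  have hK₃ : 0 ≤ K₃ := by positivity
  refine ⟨K₁ + K₂ + K₃, by positivity, fun h hh P E Q S c hP hE hc hQ hS hopt => ?_⟩
  have hh₀ : 0 < h := hδ₁.trans_le hh.1
  have hr₀ : 1 + log δ₁ ≤ h * c - log c := by
    linarith [log_sub_mul_le hh₀ hc, log_le_log hδ₁ hh.1]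
  have hreduced : δ₁ * δ / 2 * P ^ 2 + (h * c - log c)
      ≤ (C * δ₂ + C * E) * P + (δ₂ * ε - log ε) := by
    have := mul_le_mul_of_nonneg_left hQ (half_pos hh₀).le
    have := mul_le_mul_of_nonneg_right hh.1 (by positivity : 0 ≤ δ * P ^ 2)
    have := mul_le_mul_of_nonneg_right hh.2 hε
    linarith
  obtain ⟨hPK, hrK⟩ := hbound P E _ hP hE hr₀ hreduced
  have hE₂ : 0 ≤ 1 + E ^ 2 := by positivity
  refine ⟨hPK.trans (by gcongr; linarith), ?_, ?_⟩
  · refine (exp_le_exp.2 ?_).trans (exp_neg_le_of_mul_sub_log_le hh₀.le hc hrK)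
    nlinarith
  · calc c ≤ 2 / δ₁ * (K₂ * (1 + E ^ 2) - 1 - log (δ₁ / 2)) :=
          le_of_mul_sub_log_le hδ₁ hh.1 hc hrK
      _ ≤ K₃ * (1 + E ^ 2) := by
          rw [mul_assoc]
          gcongr
          nlinarith [neg_abs_le (1 + log (δ₁ / 2)), abs_nonneg (1 + log (δ₁ / 2))]
      _ ≤ (K₁ + K₂ + K₃) * (1 + E ^ 2) := by gcongr; linarith

theorem stmt_16_general (m n : ℕ)
    (δ₁ δ₂ δ C ε : ℝ) (hδ₁ : 0 < δ₁) (hδ₁₂ : δ₁ ≤ δ₂) (hδ : 0 < δ) (hC : 0 < C)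
    (hε : 0 < ε) :
    ∃ K : ℝ, 0 < K ∧
      ∀ h ∈ Set.Icc δ₁ δ₂, ∀ b : Fin m → ℝ, Real.sqrt (∑ i, b i ^ 2) ≤ C →
      ∀ σ : Matrix (Fin m) (Fin n) ℝ,
        (σ * σᵀ - δ • (1 : Matrix (Fin m) (Fin m) ℝ)).PosSemidef →
        Real.sqrt (∑ i, ∑ j, σ i j ^ 2) ≤ C →
      ∀ η : Fin n → ℝ, ∀ Θ : Set ((Fin m → ℝ) × ℝ),
        (∀ p ∈ Θ, 0 ≤ p.2) → ((0 : Fin m → ℝ), ε) ∈ Θ →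
      ∀ πhat : Fin m → ℝ, ∀ chat : ℝ, (πhat, chat) ∈ Θ → 0 < chat →
        (∀ p ∈ Θ, 0 < p.2 →
          -(h / 2) * (p.1 ⬝ᵥ ((σ * σᵀ) *ᵥ p.1)) + p.1 ⬝ᵥ (h • b + σ *ᵥ η)
              + Real.log p.2 - h * p.2
            ≤ -(h / 2) * (πhat ⬝ᵥ ((σ * σᵀ) *ᵥ πhat)) + πhat ⬝ᵥ (h • b + σ *ᵥ η)
              + Real.log chat - h * chat) →
        Real.sqrt (∑ i, πhat i ^ 2) ≤ K * (1 + Real.sqrt (∑ j, η j ^ 2))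
          ∧ Real.exp (-K * (1 + ∑ j, η j ^ 2)) ≤ chat
          ∧ chat ≤ K * (1 + ∑ j, η j ^ 2) := by
  obtain ⟨K, hK, hbound⟩ := exists_bounds_of_value_at_zero_le hδ₁ hδ₁₂ hδ hC.le hε.le
  refine ⟨K, hK, fun h hh b hb σ hσσ hσ η Θ _ hΘε πhat chat _ hchat hopt => ?_⟩
  have hzero := hopt (0, ε) hΘε hε
  simp only [zero_dotProduct, mul_zero, zero_add] at hzero
  have hlin := dotProduct_smul_add_mulVec_le ⟨hδ₁.le.trans hh.1, hh.2⟩ πhat b hb σ hσ η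
  have := hbound h hh _ _ _ _ chat (sqrt_nonneg _) (sqrt_nonneg _) hchat
    (mul_sum_sq_le_of_posSemidef_sub_smul_one hσσ πhat) hlin hzero
  rwa [sq_sqrt (Finset.sum_nonneg fun j _ => sq_nonneg _)] at this

theorem stmt_16 (m n : ℕ) (hm : 1 ≤ m) (hn : 1 ≤ n)
    (δ₁ δ₂ δ C ε : ℝ) (hδ₁ : 0 < δ₁) (hδ₁₂ : δ₁ ≤ δ₂) (hδ : 0 < δ) (hC : 0 < C)
    (hε : 0 < ε) :
    ∃ K : ℝ, 0 < K ∧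
      ∀ h ∈ Set.Icc δ₁ δ₂, ∀ b : Fin m → ℝ, Real.sqrt (∑ i, b i ^ 2) ≤ C →
      ∀ σ : Matrix (Fin m) (Fin n) ℝ,
        (σ * σᵀ - δ • (1 : Matrix (Fin m) (Fin m) ℝ)).PosSemidef →
        Real.sqrt (∑ i, ∑ j, σ i j ^ 2) ≤ C →
      ∀ η : Fin n → ℝ, ∀ Θ : Set ((Fin m → ℝ) × ℝ),
        (∀ p ∈ Θ, 0 ≤ p.2) → ((0 : Fin m → ℝ), ε) ∈ Θ →
      ∀ πhat : Fin m → ℝ, ∀ chat : ℝ, (πhat, chat) ∈ Θ → 0 < chat →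
        (∀ p ∈ Θ, 0 < p.2 →
          -(h / 2) * (p.1 ⬝ᵥ ((σ * σᵀ) *ᵥ p.1)) + p.1 ⬝ᵥ (h • b + σ *ᵥ η)
              + Real.log p.2 - h * p.2
            ≤ -(h / 2) * (πhat ⬝ᵥ ((σ * σᵀ) *ᵥ πhat)) + πhat ⬝ᵥ (h • b + σ *ᵥ η)
              + Real.log chat - h * chat) →
        Real.sqrt (∑ i, πhat i ^ 2) ≤ K * (1 + Real.sqrt (∑ j, η j ^ 2))
          ∧ Real.exp (-K * (1 + ∑ j, η j ^ 2)) ≤ chat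
          ∧ chat ≤ K * (1 + ∑ j, η j ^ 2) :=
  stmt_16_general m n δ₁ δ₂ δ C ε hδ₁ hδ₁₂ hδ hC hε
end

section
/- Let γ ∈ (0,1), m, n ≥ 1, and let constants δ > 0, C > 0 and a₁ ∈ (0,1] be given. Let b ∈ ℝ^m with |b| ≤ C, let σ ∈ ℝ^{m×n} with σσ' ≥ δ·I_m and |σ| ≤ C, and let Θ ⊆ ℝ^m × [0,∞) be a set containing (0,0). For Y ∈ ℝ and Z ∈ ℝⁿ define F(Y,Z) = γ · sup_{(π,c) ∈ Θ} [ −((1−γ)/2)·π'σσ'π + π'(b + σZ) + (c^γ/γ)·e^{−Y} − c ]. Then F(Y,Z) ≥ 0 for all Y, Z, and there exists a constant K > 0, depending only on (δ, γ, C, a₁, m, n), such that for every Z ∈ ℝⁿ and every Y ≥ ln a₁: F(Y,Z) = γ · sup over (π,c) ∈ Θ with |π| ≤ K·(1 + |Z|) of the same expression. -/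
/-!
Since `σσ' ≥ δ I`, the bracket is at most `-a|π|² + C(1+|Z|)|π| + M` with `a = (1-γ)δ/2` and
`M = ((1-γ)/γ) a₁^(-1/(1-γ))`, the latter by Young's inequality for the consumption term and
`e^{-Y} ≤ 1/a₁`. For `|π| ≥ K(1+|Z|)`, where `K ≥ 1` and `K a ≥ C + M`, this bound is
nonpositive, i.e. no better than the value `0` attained at `(0,0) ∈ Θ`, so such `π` do not
affect the supremum.
-/

open Matrix

/-- The generator of the transformed power-utility BSDE system with coupled
constraint set `Θ`:
`F(Y,Z) = γ · sup_{(π,c) ∈ Θ} [ -((1-γ)/2) π'σσ'π + π'(b + σZ) + (c^γ/γ) e^{-Y} - c ]`. -/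
noncomputable def powGen (m n : ℕ) (γ : ℝ) (b : Fin m → ℝ)
    (σ : Matrix (Fin m) (Fin n) ℝ) (Θ : Set ((Fin m → ℝ) × ℝ))
    (Y : ℝ) (Z : Fin n → ℝ) : ℝ :=
  γ * sSup {y : ℝ | ∃ p ∈ Θ,
    y = -((1 - γ) / 2) * (p.1 ⬝ᵥ ((σ * σᵀ) *ᵥ p.1)) + p.1 ⬝ᵥ (b + σ *ᵥ Z)
      + (p.2 ^ γ / γ) * Real.exp (-Y) - p.2}

section Estimates

variable {ι κ : Type*} [Fintype ι] [Fintype κ]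

lemma dotProduct_le_sqrt_mul_sqrt (v w : ι → ℝ) :
    v ⬝ᵥ w ≤ √(∑ i, v i ^ 2) * √(∑ i, w i ^ 2) :=
  Real.sum_mul_le_sqrt_mul_sqrt _ v w

lemma sqrt_sum_sq_mulVec_le (σ : Matrix ι κ ℝ) (z : κ → ℝ) :
    √(∑ i, (σ *ᵥ z) i ^ 2) ≤ √(∑ i, ∑ j, σ i j ^ 2) * √(∑ j, z j ^ 2) := by
  rw [← Real.sqrt_mul (by positivity), Finset.sum_mul]
  exact Real.sqrt_le_sqrt <|
    Finset.sum_le_sum fun i _ => Finset.sum_mul_sq_le_sq_mul_sq _ (σ i) z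

lemma Matrix.PosSemidef.mul_sum_sq_le_dotProduct_mulVec [DecidableEq ι] {A : Matrix ι ι ℝ}
    {δ : ℝ} (hA : (A - δ • (1 : Matrix ι ι ℝ)).PosSemidef) (v : ι → ℝ) :
    δ * ∑ i, v i ^ 2 ≤ v ⬝ᵥ (A *ᵥ v) := by
  have h := hA.dotProduct_mulVec_nonneg v
  simp only [star_trivial, sub_mulVec, dotProduct_sub, smul_mulVec, one_mulVec,
    dotProduct_smul, smul_eq_mul, sub_nonneg] at h
  simpa only [dotProduct, sq] using h

end Estimates

lemma Real.exp_neg_le_inv_of_log_le {a Y : ℝ} (ha : 0 < a) (hY : Real.log a ≤ Y) :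
    Real.exp (-Y) ≤ a⁻¹ :=
  calc Real.exp (-Y) ≤ Real.exp (-Real.log a) := Real.exp_le_exp.2 (neg_le_neg hY)
    _ = a⁻¹ := by rw [Real.exp_neg, Real.exp_log ha]

/-- Young's inequality in the form `sup_{c ≥ 0} (c^γ/γ) x - c = ((1-γ)/γ) x^{1/(1-γ)}`. -/
lemma rpow_div_mul_sub_le {γ c x : ℝ} (hγ : γ ∈ Set.Ioo (0 : ℝ) 1) (hc : 0 ≤ c) (hx : 0 ≤ x) :
    c ^ γ / γ * x - c ≤ (1 - γ) / γ * x ^ (1 / (1 - γ)) := by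
  obtain ⟨hγ0, hγ1⟩ := hγ
  have h1γ : 0 < 1 - γ := sub_pos.2 hγ1
  have hamgm := Real.geom_mean_le_arith_mean2_weighted hγ0.le h1γ.le hc
    (Real.rpow_nonneg hx (1 / (1 - γ))) (add_sub_cancel γ 1)
  rw [← Real.rpow_mul hx, one_div_mul_cancel h1γ.ne', Real.rpow_one] at hamgm
  calc c ^ γ / γ * x - c = (c ^ γ * x - γ * c) / γ := by field_simp
    _ ≤ (1 - γ) * x ^ (1 / (1 - γ)) / γ := by gcongr; linarith
    _ = _ := by ring

/-- The bracket in the definition of `powGen`, as a function of `p = (π, c)`. -/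
noncomputable def powGenObjective {ι κ : Type*} [Fintype ι] [Fintype κ] (γ : ℝ) (b : ι → ℝ)
    (σ : Matrix ι κ ℝ) (Y : ℝ) (Z : κ → ℝ) (p : (ι → ℝ) × ℝ) : ℝ :=
  -((1 - γ) / 2) * (p.1 ⬝ᵥ ((σ * σᵀ) *ᵥ p.1)) + p.1 ⬝ᵥ (b + σ *ᵥ Z)
    + (p.2 ^ γ / γ) * Real.exp (-Y) - p.2

section Objective

variable {ι κ : Type*} [Fintype ι] [Fintype κ]

lemma powGenObjective_zero {γ : ℝ} (hγ : γ ≠ 0) (b : ι → ℝ) (σ : Matrix ι κ ℝ) (Y : ℝ)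
    (Z : κ → ℝ) : powGenObjective γ b σ Y Z (0, 0) = 0 := by
  simp [powGenObjective, Real.zero_rpow hγ]

lemma powGenObjective_le [DecidableEq ι] {γ δ C a₁ Y : ℝ} (hγ : γ ∈ Set.Ioo (0 : ℝ) 1)
    (ha₁ : 0 < a₁) (hY : Real.log a₁ ≤ Y) {b : ι → ℝ} (hb : √(∑ i, b i ^ 2) ≤ C) {σ : Matrix ι κ ℝ}
    (hσ : (σ * σᵀ - δ • (1 : Matrix ι ι ℝ)).PosSemidef) (hσC : √(∑ i, ∑ j, σ i j ^ 2) ≤ C)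
    (Z : κ → ℝ) {p : (ι → ℝ) × ℝ} (hp : 0 ≤ p.2) :
    powGenObjective γ b σ Y Z p ≤
      -((1 - γ) * δ / 2) * √(∑ i, p.1 i ^ 2) ^ 2
        + C * (1 + √(∑ j, Z j ^ 2)) * √(∑ i, p.1 i ^ 2)
        + (1 - γ) / γ * a₁⁻¹ ^ (1 / (1 - γ)) := by
  have hquad : (1 - γ) / 2 * (δ * ∑ i, p.1 i ^ 2) ≤ (1 - γ) / 2 * (p.1 ⬝ᵥ ((σ * σᵀ) *ᵥ p.1)) :=
    mul_le_mul_of_nonneg_left (hσ.mul_sum_sq_le_dotProduct_mulVec p.1) (by linarith [hγ.2])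
  have hlin : p.1 ⬝ᵥ (b + σ *ᵥ Z) ≤ C * (1 + √(∑ j, Z j ^ 2)) * √(∑ i, p.1 i ^ 2) := by
    have hσZ := (sqrt_sum_sq_mulVec_le σ Z).trans
      (mul_le_mul_of_nonneg_right hσC (Real.sqrt_nonneg _))
    have hp1 := Real.sqrt_nonneg (∑ i, p.1 i ^ 2)
    rw [dotProduct_add]
    nlinarith [dotProduct_le_sqrt_mul_sqrt p.1 b, dotProduct_le_sqrt_mul_sqrt p.1 (σ *ᵥ Z),
      mul_le_mul_of_nonneg_left hb hp1, mul_le_mul_of_nonneg_left hσZ hp1]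
  have hcons : p.2 ^ γ / γ * Real.exp (-Y) - p.2 ≤ (1 - γ) / γ * a₁⁻¹ ^ (1 / (1 - γ)) := by
    have h1γ : 0 ≤ 1 - γ := sub_nonneg.2 hγ.2.le
    refine (rpow_div_mul_sub_le hγ hp (Real.exp_pos _).le).trans <|
      mul_le_mul_of_nonneg_left ?_ (div_nonneg h1γ hγ.1.le)
    exact Real.rpow_le_rpow (Real.exp_pos _).le (Real.exp_neg_le_inv_of_log_le ha₁ hY)
      (one_div_nonneg.2 h1γ)
  rw [Real.sq_sqrt (by positivity)]
  unfold powGenObjective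
  linarith

end Objective

lemma neg_mul_sq_add_mul_add_nonpos {a C M K t u : ℝ} (ha : 0 ≤ a) (hM : 0 ≤ M) (ht : 1 ≤ t)
    (hK : 1 ≤ K) (hKa : C + M ≤ K * a) (hu : K * t ≤ u) :
    -a * u ^ 2 + C * t * u + M ≤ 0 := by
  have hu1 : 1 ≤ u := by nlinarith
  have htu : 1 ≤ t * u := by nlinarith
  have hau : K * a * (t * u) ≤ a * u ^ 2 := by nlinarith [mul_le_mul_of_nonneg_left hu ha]
  nlinarith [mul_le_mul_of_nonneg_right hKa (by linarith : (0 : ℝ) ≤ t * u)]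

lemma sSup_eq_sSup_sep_of_le {α : Type*} {s : Set α} {g : α → ℝ} {P : α → Prop} {x₀ : α}
    (hx₀ : x₀ ∈ s) (hPx₀ : P x₀) (hbdd : BddAbove {y | ∃ p ∈ s, P p ∧ y = g p})
    (hle : ∀ p ∈ s, ¬P p → g p ≤ g x₀) :
    sSup {y | ∃ p ∈ s, y = g p} = sSup {y | ∃ p ∈ s, P p ∧ y = g p} := by
  have hx₀mem : g x₀ ∈ {y | ∃ p ∈ s, P p ∧ y = g p} := ⟨x₀, hx₀, hPx₀, rfl⟩
  have hall : ∀ p ∈ s, g p ≤ sSup {y | ∃ p ∈ s, P p ∧ y = g p} := by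
    intro p hp
    by_cases hP : P p
    · exact le_csSup hbdd ⟨p, hp, hP, rfl⟩
    · exact (hle p hp hP).trans (le_csSup hbdd hx₀mem)
  refine le_antisymm (csSup_le ⟨g x₀, x₀, hx₀, rfl⟩ ?_) (csSup_le_csSup ?_ ⟨_, hx₀mem⟩ ?_)
  · rintro _ ⟨p, hp, rfl⟩
    exact hall p hp
  · exact ⟨_, by rintro _ ⟨p, hp, rfl⟩; exact hall p hp⟩
  · rintro _ ⟨p, hp, -, rfl⟩
    exact ⟨p, hp, rfl⟩

lemma powGen_nonneg {m n : ℕ} {γ : ℝ} (hγ : 0 < γ) (b : Fin m → ℝ)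
    (σ : Matrix (Fin m) (Fin n) ℝ) {Θ : Set ((Fin m → ℝ) × ℝ)} (h0 : (0, 0) ∈ Θ) (Y : ℝ)
    (Z : Fin n → ℝ) : 0 ≤ powGen m n γ b σ Θ Y Z :=
  mul_nonneg hγ.le <| Real.sSup_nonneg'
    ⟨0, ⟨(0, 0), h0, (powGenObjective_zero hγ.ne' b σ Y Z).symm⟩, le_rfl⟩

lemma powGen_eq_sSup_norm_le {m n : ℕ} {γ δ C a₁ K Y : ℝ} (hγ : γ ∈ Set.Ioo (0 : ℝ) 1)
    (ha₁ : 0 < a₁) (hY : Real.log a₁ ≤ Y) {b : Fin m → ℝ} (hb : √(∑ i, b i ^ 2) ≤ C)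
    {σ : Matrix (Fin m) (Fin n) ℝ} (hσ : (σ * σᵀ - δ • (1 : Matrix (Fin m) (Fin m) ℝ)).PosSemidef)
    (hσC : √(∑ i, ∑ j, σ i j ^ 2) ≤ C) {Θ : Set ((Fin m → ℝ) × ℝ)} (hΘ : ∀ p ∈ Θ, 0 ≤ p.2)
    (h0 : (0, 0) ∈ Θ) (hK : 1 ≤ K)
    (hKa : C + (1 - γ) / γ * a₁⁻¹ ^ (1 / (1 - γ)) ≤ K * ((1 - γ) * δ / 2)) (Z : Fin n → ℝ) :
    powGen m n γ b σ Θ Y Z = γ * sSup {y | ∃ p ∈ Θ,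
      √(∑ i, p.1 i ^ 2) ≤ K * (1 + √(∑ j, Z j ^ 2)) ∧ y = powGenObjective γ b σ Y Z p} := by
  have hC : 0 ≤ C := (Real.sqrt_nonneg _).trans hb
  have hM : 0 ≤ (1 - γ) / γ * a₁⁻¹ ^ (1 / (1 - γ)) := by
    have := hγ.1
    have : 0 ≤ 1 - γ := sub_nonneg.2 hγ.2.le
    positivity
  have ha : 0 ≤ (1 - γ) * δ / 2 := nonneg_of_mul_nonneg_right (by linarith) (by linarith : 0 < K)
  have ht : 1 ≤ 1 + √(∑ j, Z j ^ 2) := le_add_of_nonneg_right (Real.sqrt_nonneg _)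
  have hbound := fun p (hp : p ∈ Θ) =>
    powGenObjective_le hγ ha₁ hY hb hσ hσC Z (hΘ p hp)
  refine congrArg (γ * ·) <| sSup_eq_sSup_sep_of_le (g := powGenObjective γ b σ Y Z)
    (P := fun p => √(∑ i, p.1 i ^ 2) ≤ K * (1 + √(∑ j, Z j ^ 2))) h0 (by simp; positivity)
    ⟨C * K * (1 + √(∑ j, Z j ^ 2)) ^ 2 + (1 - γ) / γ * a₁⁻¹ ^ (1 / (1 - γ)), ?_⟩ ?_
  · -- drop `-a|π|²` and use `|π| ≤ K t`
    rintro _ ⟨p, hp, hpK, rfl⟩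
    have hu := Real.sqrt_nonneg (∑ i, p.1 i ^ 2)
    nlinarith [hbound p hp, mul_le_mul_of_nonneg_left hpK
      (mul_nonneg hC (by linarith : (0 : ℝ) ≤ 1 + √(∑ j, Z j ^ 2)))]
  · intro p hp hpK
    rw [powGenObjective_zero hγ.1.ne']
    exact (hbound p hp).trans
      (neg_mul_sq_add_mul_add_nonpos ha hM ht hK hKa (le_of_not_ge hpK))

theorem stmt_17_general (γ : ℝ) (hγ : γ ∈ Set.Ioo (0 : ℝ) 1) (m n : ℕ)
    (δ C a₁ : ℝ) (hδ : 0 < δ) (ha₁ : a₁ ∈ Set.Ioc (0 : ℝ) 1) :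
    (∀ b : Fin m → ℝ, Real.sqrt (∑ i, b i ^ 2) ≤ C →
      ∀ σ : Matrix (Fin m) (Fin n) ℝ,
        (σ * σᵀ - δ • (1 : Matrix (Fin m) (Fin m) ℝ)).PosSemidef →
        Real.sqrt (∑ i, ∑ j, σ i j ^ 2) ≤ C →
      ∀ Θ : Set ((Fin m → ℝ) × ℝ), (∀ p ∈ Θ, 0 ≤ p.2) →
        ((0 : Fin m → ℝ), (0 : ℝ)) ∈ Θ →
      ∀ (Y : ℝ) (Z : Fin n → ℝ), 0 ≤ powGen m n γ b σ Θ Y Z)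
    ∧ ∃ K : ℝ, 0 < K ∧
      ∀ b : Fin m → ℝ, Real.sqrt (∑ i, b i ^ 2) ≤ C →
      ∀ σ : Matrix (Fin m) (Fin n) ℝ,
        (σ * σᵀ - δ • (1 : Matrix (Fin m) (Fin m) ℝ)).PosSemidef →
        Real.sqrt (∑ i, ∑ j, σ i j ^ 2) ≤ C →
      ∀ Θ : Set ((Fin m → ℝ) × ℝ), (∀ p ∈ Θ, 0 ≤ p.2) →
        ((0 : Fin m → ℝ), (0 : ℝ)) ∈ Θ →
      ∀ (Y : ℝ) (Z : Fin n → ℝ), Real.log a₁ ≤ Y →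
        powGen m n γ b σ Θ Y Z
          = γ * sSup {y : ℝ | ∃ p ∈ Θ,
              Real.sqrt (∑ i, p.1 i ^ 2) ≤ K * (1 + Real.sqrt (∑ j, Z j ^ 2)) ∧
              y = -((1 - γ) / 2) * (p.1 ⬝ᵥ ((σ * σᵀ) *ᵥ p.1)) + p.1 ⬝ᵥ (b + σ *ᵥ Z)
                + (p.2 ^ γ / γ) * Real.exp (-Y) - p.2} := by
  refine ⟨fun b _ σ _ _ Θ _ h0 Y Z => powGen_nonneg hγ.1 b σ h0 Y Z, ?_⟩
  have ha : 0 < (1 - γ) * δ / 2 := half_pos (mul_pos (sub_pos.2 hγ.2) hδ)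
  refine ⟨max 1 ((C + (1 - γ) / γ * a₁⁻¹ ^ (1 / (1 - γ))) / ((1 - γ) * δ / 2)),
    lt_max_of_lt_left one_pos, fun b hb σ hσ hσC Θ hΘ h0 Y Z hY => ?_⟩
  exact powGen_eq_sSup_norm_le hγ ha₁.1 hY hb hσ hσC hΘ h0 (le_max_left _ _)
    ((div_le_iff₀ ha).1 (le_max_right _ _)) Z

theorem stmt_17 (γ : ℝ) (hγ : γ ∈ Set.Ioo (0 : ℝ) 1) (m n : ℕ) (hm : 1 ≤ m) (hn : 1 ≤ n)
    (δ C a₁ : ℝ) (hδ : 0 < δ) (hC : 0 < C) (ha₁ : a₁ ∈ Set.Ioc (0 : ℝ) 1) :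
    (∀ b : Fin m → ℝ, Real.sqrt (∑ i, b i ^ 2) ≤ C →
      ∀ σ : Matrix (Fin m) (Fin n) ℝ,
        (σ * σᵀ - δ • (1 : Matrix (Fin m) (Fin m) ℝ)).PosSemidef →
        Real.sqrt (∑ i, ∑ j, σ i j ^ 2) ≤ C →
      ∀ Θ : Set ((Fin m → ℝ) × ℝ), (∀ p ∈ Θ, 0 ≤ p.2) →
        ((0 : Fin m → ℝ), (0 : ℝ)) ∈ Θ →
      ∀ (Y : ℝ) (Z : Fin n → ℝ), 0 ≤ powGen m n γ b σ Θ Y Z)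
    ∧ ∃ K : ℝ, 0 < K ∧
      ∀ b : Fin m → ℝ, Real.sqrt (∑ i, b i ^ 2) ≤ C →
      ∀ σ : Matrix (Fin m) (Fin n) ℝ,
        (σ * σᵀ - δ • (1 : Matrix (Fin m) (Fin m) ℝ)).PosSemidef →
        Real.sqrt (∑ i, ∑ j, σ i j ^ 2) ≤ C →
      ∀ Θ : Set ((Fin m → ℝ) × ℝ), (∀ p ∈ Θ, 0 ≤ p.2) →
        ((0 : Fin m → ℝ), (0 : ℝ)) ∈ Θ →
      ∀ (Y : ℝ) (Z : Fin n → ℝ), Real.log a₁ ≤ Y →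
        powGen m n γ b σ Θ Y Z
          = γ * sSup {y : ℝ | ∃ p ∈ Θ,
              Real.sqrt (∑ i, p.1 i ^ 2) ≤ K * (1 + Real.sqrt (∑ j, Z j ^ 2)) ∧
              y = -((1 - γ) / 2) * (p.1 ⬝ᵥ ((σ * σᵀ) *ᵥ p.1)) + p.1 ⬝ᵥ (b + σ *ᵥ Z)
                + (p.2 ^ γ / γ) * Real.exp (-Y) - p.2} :=
  stmt_17_general γ hγ m n δ C a₁ hδ ha₁
end
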